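/- arXiv:math/9910172 — 8 statements merged into one kernel-verified Lean document; each statement's English description precedes it below -/
import Mathlib

section
/- For every nonzero a ∈ g_{−1}, the family (p^a_j)_{j∈ℤ} satisfies ⁅p^a_i, p^a_j⁆ ⊆ p^a_{i+j} for all i, j ∈ ℤ, so that p^a = ⊕_{j∈ℤ} p^a_j is a parabolic subalgebra of g containing a; moreover, p^a is minimal with this property: for every parabolic subalgebra p = ⊕_j p_j of g with a ∈ p_{−1}, one has p^a_j ⊆ p_j for all j ∈ ℤ. -/
variable {g : Type*} [LieRing g] [LieAlgebra ℂ g]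

/-- `p^a_{−1}`: the span of all iterated brackets `(ad c_r)⋯(ad c_1)(a)` with
`c_1, …, c_r ∈ g_0` (the empty list giving `a` itself). -/
noncomputable def paNegOne (G : ℤ → Submodule ℂ g) (a : g) : Submodule ℂ g :=
  Submodule.span ℂ
    {x | ∃ l : List g, (∀ c ∈ l, c ∈ G 0) ∧ x = l.foldr (fun c y => ⁅c, y⁆) a}

/-- `paNegK G a m = p^a_{−(m+1)}`: inductively, `p^a_{−k−1} = span ⁅p^a_{−1}, p^a_{−k}⁆`. -/
noncomputable def paNegK (G : ℤ → Submodule ℂ g) (a : g) : ℕ → Submodule ℂ g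
  | 0 => paNegOne G a
  | m + 1 => Submodule.span ℂ
      {z | ∃ x ∈ paNegOne G a, ∃ y ∈ paNegK G a m, z = ⁅x, y⁆}

/-- The family `p^a_j`: equal to `g_j` for `j ≥ 0` and to `p^a_{−k}` for `j = −k < 0`. -/
noncomputable def pa (G : ℤ → Submodule ℂ g) (a : g) (j : ℤ) : Submodule ℂ g :=
  if 0 ≤ j then G j else paNegK G a ((-j).toNat - 1)

/-!
`p^a_{-1}` is the smallest `ad(g_0)`-stable subspace containing `a`, and `p^a_{j-1}` is spanned by
`⁅p^a_{-1}, p^a_j⁆`; minimality follows at once by downward induction on the degree.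
For the bracket relations, antisymmetry and the grading leave only `⁅p^a_i, p^a_j⁆` with `i < 0`.
By the Jacobi identity `⁅⁅u, v⁆, y⁆ = ⁅u, ⁅v, y⁆⁆ - ⁅v, ⁅u, y⁆⁆`, downward induction on `i`
reduces this to `i = -1`, where `⁅x, y⁆` is a generator of `p^a_{j-1}` (`j < 0`),
lies in `p^a_{-1}` by `ad(g_0)`-stability (`j = 0`), or lies in `g_{j-1}` by the grading (`j > 0`).
-/

lemma lie_mem_of_mem_span {R L : Type*} [CommRing R] [LieRing L] [LieAlgebra R L]
    {s : Set L} {N : Submodule R L} {y : L} (h : ∀ x ∈ s, ⁅x, y⁆ ∈ N) {x : L}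
    (hx : x ∈ Submodule.span R s) : ⁅x, y⁆ ∈ N := by
  induction hx using Submodule.span_induction with
  | mem x hx => exact h x hx
  | zero => simp
  | add x z _ _ hx hz => rw [add_lie]; exact add_mem hx hz
  | smul r x _ hx => rw [smul_lie]; exact N.smul_mem r hx

section

variable (G : ℤ → Submodule ℂ g) (a : g)

lemma pa_of_nonneg {j : ℤ} (hj : 0 ≤ j) : pa G a j = G j := if_pos hj

lemma pa_neg_one : pa G a (-1) = paNegOne G a := rfl

lemma self_mem_pa_neg_one : a ∈ pa G a (-1) :=
  Submodule.subset_span ⟨[], by simp, rfl⟩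

lemma pa_sub_one {j : ℤ} (hj : j < 0) :
    pa G a (j - 1) =
      Submodule.span ℂ {z | ∃ x ∈ pa G a (-1), ∃ y ∈ pa G a j, z = ⁅x, y⁆} := by
  have hk : (-(j - 1)).toNat - 1 = (-j).toNat - 1 + 1 := by omega
  rw [pa, if_neg (by omega), hk, paNegK, pa_neg_one, pa, if_neg (by omega)]

lemma paNegOne_le_of_lie_mem {N : Submodule ℂ g} (haN : a ∈ N)
    (hN : ∀ c ∈ G 0, ∀ x ∈ N, ⁅c, x⁆ ∈ N) : paNegOne G a ≤ N := by
  rw [paNegOne, Submodule.span_le]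
  rintro _ ⟨l, hl, rfl⟩
  induction l with
  | nil => exact haN
  | cons c l ih =>
    exact hN c (hl c List.mem_cons_self) _ (ih fun d hd => hl d (List.mem_cons_of_mem c hd))

lemma lie_mem_paNegOne {c : g} (hc : c ∈ G 0) {x : g} (hx : x ∈ paNegOne G a) :
    ⁅c, x⁆ ∈ paNegOne G a := by
  suffices paNegOne G a ≤ (paNegOne G a).comap (LieAlgebra.ad ℂ g c) from this hx
  rw [paNegOne, Submodule.span_le]
  rintro _ ⟨l, hl, rfl⟩
  refine Submodule.subset_span ⟨c :: l, ?_, rfl⟩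
  simpa [List.forall_mem_cons] using ⟨hc, hl⟩

variable {G a}

lemma paNegOne_le (hgrade : ∀ i j : ℤ, ∀ x ∈ G i, ∀ y ∈ G j, ⁅x, y⁆ ∈ G (i + j))
    (ha : a ∈ G (-1)) : paNegOne G a ≤ G (-1) :=
  paNegOne_le_of_lie_mem G a ha fun c hc x hx => by simpa using hgrade 0 (-1) c hc x hx

lemma lie_mem_pa_of_mem_pa_neg_one
    (hgrade : ∀ i j : ℤ, ∀ x ∈ G i, ∀ y ∈ G j, ⁅x, y⁆ ∈ G (i + j)) (ha : a ∈ G (-1))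
    {j : ℤ} {x y : g} (hx : x ∈ pa G a (-1)) (hy : y ∈ pa G a j) :
    ⁅x, y⁆ ∈ pa G a (-1 + j) := by
  rcases lt_trichotomy j 0 with hj | rfl | hj
  · rw [neg_add_eq_sub, pa_sub_one G a hj]
    exact Submodule.subset_span ⟨x, hx, y, hy, rfl⟩
  · rw [pa_of_nonneg G a le_rfl] at hy
    rw [← lie_skew]
    exact neg_mem (lie_mem_paNegOne G a hy hx)
  · rw [pa_of_nonneg G a hj.le] at hy
    rw [pa_of_nonneg G a (by omega)]
    exact hgrade (-1) j x (paNegOne_le hgrade ha hx) y hy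

lemma lie_mem_pa_of_neg
    (hgrade : ∀ i j : ℤ, ∀ x ∈ G i, ∀ y ∈ G j, ⁅x, y⁆ ∈ G (i + j)) (ha : a ∈ G (-1))
    {i : ℤ} (hi : i ≤ -1) : ∀ j : ℤ, ∀ x ∈ pa G a i, ∀ y ∈ pa G a j, ⁅x, y⁆ ∈ pa G a (i + j) := by
  induction i, hi using Int.leInductionDown with
  | base => exact fun j x hx y hy => lie_mem_pa_of_mem_pa_neg_one hgrade ha hx hy
  | pred i hi ih =>
    intro j x hx y hy
    rw [pa_sub_one G a (by omega)] at hx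
    refine lie_mem_of_mem_span ?_ hx
    rintro _ ⟨u, hu, v, hv, rfl⟩
    have huvy : ⁅u, ⁅v, y⁆⁆ ∈ pa G a (-1 + (i + j)) :=
      lie_mem_pa_of_mem_pa_neg_one hgrade ha hu (ih j v hv y hy)
    have hvuy : ⁅v, ⁅u, y⁆⁆ ∈ pa G a (i + (-1 + j)) :=
      ih _ v hv _ (lie_mem_pa_of_mem_pa_neg_one hgrade ha hu hy)
    rw [lie_lie]
    refine sub_mem ?_ ?_
    · convert huvy using 2; ring
    · convert hvuy using 2; ring

lemma lie_mem_pa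
    (hgrade : ∀ i j : ℤ, ∀ x ∈ G i, ∀ y ∈ G j, ⁅x, y⁆ ∈ G (i + j)) (ha : a ∈ G (-1))
    (i j : ℤ) (x : g) (hx : x ∈ pa G a i) (y : g) (hy : y ∈ pa G a j) :
    ⁅x, y⁆ ∈ pa G a (i + j) := by
  rcases lt_or_ge i 0 with hi | hi
  · exact lie_mem_pa_of_neg hgrade ha (by omega) j x hx y hy
  rcases lt_or_ge j 0 with hj | hj
  · rw [← lie_skew, add_comm]
    exact neg_mem (lie_mem_pa_of_neg hgrade ha (by omega) i y hy x hx)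
  rw [pa_of_nonneg G a hi] at hx
  rw [pa_of_nonneg G a hj] at hy
  rw [pa_of_nonneg G a (by omega)]
  exact hgrade i j x hx y hy

lemma pa_le_of_neg_one_le {p : ℤ → Submodule ℂ g}
    (hp : ∀ i j : ℤ, ∀ x ∈ p i, ∀ y ∈ p j, ⁅x, y⁆ ∈ p (i + j))
    (hneg_one : pa G a (-1) ≤ p (-1)) {j : ℤ} (hj : j ≤ -1) : pa G a j ≤ p j := by
  induction j, hj using Int.leInductionDown with
  | base => exact hneg_one
  | pred j hj ih =>
    rw [pa_sub_one G a (by omega), Submodule.span_le]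
    rintro _ ⟨x, hx, y, hy, rfl⟩
    have h := hp (-1) j x (hneg_one hx) y (ih hy)
    rwa [neg_add_eq_sub] at h

lemma pa_le (hgrade : ∀ i j : ℤ, ∀ x ∈ G i, ∀ y ∈ G j, ⁅x, y⁆ ∈ G (i + j))
    (ha : a ∈ G (-1)) (j : ℤ) : pa G a j ≤ G j := by
  rcases lt_or_ge j 0 with hj | hj
  · exact pa_le_of_neg_one_le hgrade (paNegOne_le hgrade ha) (by omega)
  · exact (pa_of_nonneg G a hj).le

lemma pa_le_of_lie_closed {p : ℤ → Submodule ℂ g}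
    (hp : ∀ i j : ℤ, ∀ x ∈ p i, ∀ y ∈ p j, ⁅x, y⁆ ∈ p (i + j))
    (hp_nonneg : ∀ j : ℤ, 0 ≤ j → p j = G j) (hap : a ∈ p (-1)) (j : ℤ) : pa G a j ≤ p j := by
  rcases lt_or_ge j 0 with hj | hj
  · refine pa_le_of_neg_one_le hp ?_ (by omega)
    refine paNegOne_le_of_lie_mem G a hap fun c hc x hx => ?_
    rw [← hp_nonneg 0 le_rfl] at hc
    simpa using hp 0 (-1) c hc x hx
  · rw [pa_of_nonneg G a hj, hp_nonneg j hj]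

end

theorem stmt1_general {g : Type*} [LieRing g] [LieAlgebra ℂ g]
    (G : ℤ → Submodule ℂ g)
    (hgrade : ∀ i j : ℤ, ∀ x ∈ G i, ∀ y ∈ G j, ⁅x, y⁆ ∈ G (i + j))
    (a : g) (ha : a ∈ G (-1)) (ha0 : a ≠ 0) :
    (∀ i j : ℤ, ∀ x ∈ pa G a i, ∀ y ∈ pa G a j, ⁅x, y⁆ ∈ pa G a (i + j))
    ∧ (∀ j : ℤ, pa G a j ≤ G j)
    ∧ (∀ j : ℤ, 0 ≤ j → pa G a j = G j)
    ∧ a ∈ pa G a (-1)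
    ∧ (∃ j : ℤ, j < 0 ∧ pa G a j ≠ ⊥)
    ∧ (∀ p : ℤ → Submodule ℂ g, (∀ j : ℤ, p j ≤ G j) →
        (∀ i j : ℤ, ∀ x ∈ p i, ∀ y ∈ p j, ⁅x, y⁆ ∈ p (i + j)) →
        (∀ j : ℤ, 0 ≤ j → p j = G j) →
        (∃ j : ℤ, j < 0 ∧ p j ≠ ⊥) →
        a ∈ p (-1) →
        ∀ j : ℤ, pa G a j ≤ p j) := by
  have hamem := self_mem_pa_neg_one G a
  refine ⟨lie_mem_pa hgrade ha, pa_le hgrade ha, fun _ => pa_of_nonneg G a, hamem,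
    ⟨-1, by norm_num, fun hbot => ha0 ((Submodule.mem_bot ℂ).mp (hbot ▸ hamem))⟩,
    fun p _ hp hp_nonneg _ hap => pa_le_of_lie_closed hp hp_nonneg hap⟩

/-- Lemma 2.2 a: `p^a` is a parabolic subalgebra containing `a`, and it
is the minimal one among parabolic subalgebras `p` with `a ∈ p_{−1}`. -/
theorem stmt1 {g : Type*} [LieRing g] [LieAlgebra ℂ g]
    (G : ℤ → Submodule ℂ g)
    (hdirect : DirectSum.IsInternal G)
    (hgrade : ∀ i j : ℤ, ∀ x ∈ G i, ∀ y ∈ G j, ⁅x, y⁆ ∈ G (i + j))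
    (hP1 : ∀ x ∈ G 0, ∀ y ∈ G 0, ⁅x, y⁆ = 0)
    (hP2 : ∀ k : ℤ, 0 < k → ∀ b ∈ G (-k), (∀ x ∈ G 1, ⁅b, x⁆ = 0) → b = 0)
    (a : g) (ha : a ∈ G (-1)) (ha0 : a ≠ 0) :
    (∀ i j : ℤ, ∀ x ∈ pa G a i, ∀ y ∈ pa G a j, ⁅x, y⁆ ∈ pa G a (i + j))
    ∧ (∀ j : ℤ, pa G a j ≤ G j)
    ∧ (∀ j : ℤ, 0 ≤ j → pa G a j = G j)
    ∧ a ∈ pa G a (-1)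
    ∧ (∃ j : ℤ, j < 0 ∧ pa G a j ≠ ⊥)
    ∧ (∀ p : ℤ → Submodule ℂ g, (∀ j : ℤ, p j ≤ G j) →
        (∀ i j : ℤ, ∀ x ∈ p i, ∀ y ∈ p j, ⁅x, y⁆ ∈ p (i + j)) →
        (∀ j : ℤ, 0 ≤ j → p j = G j) →
        (∃ j : ℤ, j < 0 ∧ p j ≠ ⊥) →
        a ∈ p (-1) →
        ∀ j : ℤ, pa G a j ≤ p j) :=
  stmt1_general G hgrade a ha ha0
end

section
/- Let V be a module over the Lie algebra g and let v ∈ V be a nonzero vector such that x·v = 0 for all x ∈ g_j with j ≥ 1, and h·v = λ(h)·v for all h ∈ g_0, where λ : g_0 → ℂ is a linear functional. If g_{−1} is infinite-dimensional over ℂ and the subspace g_{−1}·v = {a·v : a ∈ g_{−1}} of V is finite-dimensional, then there exists a nonzero element a ∈ g_{−1} with a·v = 0 and λ(⁅x, a⁆) = 0 for all x ∈ g_1. (This is the key implication 'L(λ) quasifinite ⇒ condition (2)' of Theorem 2.5.) -/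
/-- key implication of Theorem 2.5: if `v` is a highest weight vector
(annihilated by `g_j`, `j ≥ 1`, and a `λ`-eigenvector for `g_0`), `g_{−1}` is
infinite-dimensional and `g_{−1}·v` is finite-dimensional, then there is a nonzero
`a ∈ g_{−1}` with `a·v = 0` and `λ(⁅x, a⁆) = 0` for all `x ∈ g_1`. -/
theorem stmt3 {g : Type*} [LieRing g] [LieAlgebra ℂ g]
    {V : Type*} [AddCommGroup V] [Module ℂ V] [LieRingModule g V] [LieModule ℂ g V]
    (G : ℤ → Submodule ℂ g)
    (hdirect : DirectSum.IsInternal G)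
    (hgrade : ∀ i j : ℤ, ∀ x ∈ G i, ∀ y ∈ G j, ⁅x, y⁆ ∈ G (i + j))
    (hP1 : ∀ x ∈ G 0, ∀ y ∈ G 0, ⁅x, y⁆ = 0)
    (hP2 : ∀ k : ℤ, 0 < k → ∀ b ∈ G (-k), (∀ x ∈ G 1, ⁅b, x⁆ = 0) → b = 0)
    (v : V) (hv : v ≠ 0)
    (lam : (G 0 : Submodule ℂ g) →ₗ[ℂ] ℂ)
    (hweight : ∀ h : (G 0 : Submodule ℂ g), ⁅(h : g), v⁆ = lam h • v)
    (hann : ∀ j : ℤ, 1 ≤ j → ∀ x ∈ G j, ⁅x, v⁆ = 0)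
    (hinf : ¬ FiniteDimensional ℂ (G (-1) : Submodule ℂ g))
    (hfin : FiniteDimensional ℂ
      (Submodule.span ℂ {w : V | ∃ a ∈ G (-1), w = ⁅a, v⁆} : Submodule ℂ V)) :
    ∃ a ∈ G (-1), a ≠ 0 ∧ ⁅a, v⁆ = 0 ∧
      ∀ x, x ∈ G 1 → ∀ hm : ⁅x, a⁆ ∈ G 0, lam ⟨⁅x, a⁆, hm⟩ = 0 := by
  set W : Submodule ℂ V :=
    Submodule.span ℂ {w : V | ∃ a ∈ G (-1), w = ⁅a, v⁆} with hW
  -- the linear map a ↦ ⁅a, v⁆ from G(-1) into W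
  let T : (G (-1) : Submodule ℂ g) →ₗ[ℂ] W :=
    { toFun := fun a => ⟨⁅(a : g), v⁆, Submodule.subset_span ⟨a, a.2, rfl⟩⟩
      map_add' := fun a b => by ext; simp [add_lie]
      map_smul' := fun c a => by ext; simp [smul_lie] }
  -- T cannot be injective
  have hker : ∃ a : (G (-1) : Submodule ℂ g), a ≠ 0 ∧ ⁅(a : g), v⁆ = 0 := by
    by_contra h
    push_neg at h
    have hinj : Function.Injective T := by
      rw [injective_iff_map_eq_zero]
      intro a ha
      by_contra hne
      exact (h a hne) (by simpa [T, Subtype.ext_iff] using ha)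
    exact hinf (FiniteDimensional.of_injective T hinj)
  obtain ⟨a, ha0, hav⟩ := hker
  refine ⟨(a : g), a.2, fun h => ha0 (Subtype.ext (by simpa using h)), hav, ?_⟩
  intro x hx hm
  have hxv : ⁅x, v⁆ = 0 := hann 1 le_rfl x hx
  have key : ⁅⁅x, (a : g)⁆, v⁆ = 0 := by
    rw [lie_lie, hav, hxv, lie_zero, lie_zero, sub_zero]
  have := hweight ⟨⁅x, (a : g)⁆, hm⟩
  rw [key] at this
  have := (smul_eq_zero.mp this.symm).resolve_right hv
  simpa using this
end

section
/- Let n ≥ 2 be an integer. If polynomials f, g ∈ ℂ[w] satisfy the identity of linear endomorphisms of ℂ[t, t⁻¹] [t·f(D)·[D]_n, g(D)·[D]_n] = t·f(D)·[D]_n, then f = 0. (Consequently the Lie algebra W_∞^{(n)} contains no ℤ-graded subalgebra isomorphic to the Virasoro algebra when n ≥ 2, since the Virasoro relation ⁅L_1, L_0⁆ = L_1 cannot be satisfied with L_1 ≠ 0.) -/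
open Polynomial

/-- The weight operator `f(D)` on `ℂ[t,t⁻¹] ≃ (ℤ →₀ ℂ)`, acting by
`f(D)(t^j) = f(j)·t^j`, where the basis vector `t^j` is `Finsupp.single j 1`. -/
noncomputable def wtOp (f : ℂ[X]) : Module.End ℂ (ℤ →₀ ℂ) :=
  Finsupp.lsum ℂ fun j : ℤ => f.eval (j : ℂ) • Finsupp.lsingle j

/-- The shift operator: multiplication by `t^k`, i.e. `t^j ↦ t^{j+k}`. -/
noncomputable def shOp (k : ℤ) : Module.End ℂ (ℤ →₀ ℂ) :=
  Finsupp.lmapDomain ℂ ℂ fun j : ℤ => j + k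

/-- The operator `t^k f(D)` on `ℂ[t,t⁻¹]`: first apply `f(D)`, then multiply by `t^k`. -/
noncomputable def op (k : ℤ) (f : ℂ[X]) : Module.End ℂ (ℤ →₀ ℂ) :=
  (shOp k).comp (wtOp f)

/-- The falling-factorial polynomial `[w]_n = w(w−1)⋯(w−n+1)`. -/
noncomputable def ffp (n : ℕ) : ℂ[X] :=
  ∏ i ∈ Finset.range n, (X - C (i : ℂ))

lemma op_single (k : ℤ) (p : ℂ[X]) (j : ℤ) :
    op k p (Finsupp.single j 1) = p.eval (j : ℂ) • Finsupp.single (j + k) 1 := by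
  rw [op, LinearMap.comp_apply, wtOp, Finsupp.lsum_single, LinearMap.smul_apply,
    Finsupp.lsingle_apply, shOp, Finsupp.lmapDomain_apply, Finsupp.mapDomain_smul,
    Finsupp.mapDomain_single]

/-- for n ≥ 2, if `[t·f(D)·[D]_n, g(D)·[D]_n] = t·f(D)·[D]_n` then f = 0
(so no Virasoro subalgebra inside W_∞^{(n)} for n ≥ 2). -/
theorem stmt5 (n : ℕ) (hn : 2 ≤ n) (f g : ℂ[X])
    (h : ⁅op 1 (f * ffp n), op 0 (g * ffp n)⁆ = op 1 (f * ffp n)) :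
    f = 0 := by
  set F := f * ffp n with hF
  set G := g * ffp n with hG
  rw [LieRing.of_associative_ring_bracket] at h
  have key : ∀ j : ℤ, F.eval (j:ℂ) * (G.eval (j:ℂ) - G.eval ((j:ℂ)+1) - 1) = 0 := by
    intro j
    have h2 := congrArg (fun L : Module.End ℂ (ℤ →₀ ℂ) => L (Finsupp.single j 1) (j+1)) h
    simp only [LinearMap.sub_apply, Module.End.mul_apply, op_single, map_smul,
      Finsupp.sub_apply, Finsupp.smul_apply, smul_eq_mul, add_zero] at h2
    push_cast at h2
    simp only [Finsupp.single_eq_same, mul_one] at h2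
    linear_combination h2
  have hP : F * (G - G.comp (X + 1) - 1) = 0 := by
    apply Polynomial.eq_zero_of_infinite_isRoot
    apply Set.infinite_of_injective_forall_mem (f := fun j : ℤ => (j : ℂ))
    · intro a b hab; simpa using hab
    · intro j
      
      simp only [Set.mem_setOf_eq, IsRoot, eval_mul, eval_sub, eval_comp, eval_add,
        eval_X, eval_one]
      exact key j
  rcases mul_eq_zero.mp hP with hF0 | hG0
  · have hffp : ffp n ≠ 0 := by
      apply Polynomial.Monic.ne_zero
      exact monic_prod_of_monic _ _ fun i _ => monic_X_sub_C _
    rcases mul_eq_zero.mp hF0 with h0 | h0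
    · exact h0
    · exact absurd h0 hffp
  · exfalso
    have e0 := congrArg (fun p : ℂ[X] => p.eval 0) hG0
    have hroot : ∀ m : ℕ, m < n → (ffp n).eval (m : ℂ) = 0 := by
      intro m hm
      simp only [ffp, eval_prod, eval_sub, eval_X, eval_C]
      exact Finset.prod_eq_zero (Finset.mem_range.mpr hm) (by simp)
    have h0 : (ffp n).eval 0 = 0 := by simpa using hroot 0 (by omega)
    have h1 : (ffp n).eval 1 = 0 := by simpa using hroot 1 (by omega)
    simp only [eval_sub, eval_comp, eval_add, eval_X, eval_one, eval_mul, hG, eval_zero] at e0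
    rw [h0] at e0
    norm_num [h1] at e0
end

section
/- For n ∈ {0, 1, 2} and every integer k ≥ 1, any ℂ-subspace I of ℂ[w] satisfying A_{n,k}·I ⊆ I (i.e. p·q ∈ I for all p ∈ A_{n,k} and q ∈ I) is an ideal of ℂ[w], i.e. w·I ⊆ I. -/
open Polynomial

/-- `A_{n,k}`: the ℂ-linear span of `{f(w−k)·[w−k]_n − f(w)·[w]_n : f ∈ ℂ[w]}`. -/
noncomputable def Ank (n k : ℕ) : Submodule ℂ ℂ[X] :=
  Submodule.span ℂ
    {p | ∃ f : ℂ[X],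
      p = f.comp (X - C (k : ℂ)) * (ffp n).comp (X - C (k : ℂ)) - f * ffp n}

lemma key (k : ℕ) (hk : 1 ≤ k) (I : Submodule ℂ ℂ[X]) (q : ℂ[X]) (hq : q ∈ I)
    (c : ℂ) (h : (C (-2 * (k : ℂ)) * X + C c) * q ∈ I) : (X : ℂ[X]) * q ∈ I := by
  have hk0 : (k : ℂ) ≠ 0 := Nat.cast_ne_zero.mpr (by omega)
  have h2k : (-2 * (k : ℂ)) ≠ 0 := by simp [hk0]
  have hcq : C c * q ∈ I := by simpa [smul_eq_C_mul] using I.smul_mem c hq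
  have h1 : C (-2 * (k : ℂ)) * (X * q) ∈ I := by
    have e : (C (-2 * (k : ℂ)) * X + C c) * q - C c * q = C (-2 * (k : ℂ)) * (X * q) := by
      ring
    have := I.sub_mem h hcq
    rwa [e] at this
  have e2 : (X : ℂ[X]) * q = ((-2 * (k : ℂ))⁻¹) • (C (-2 * (k : ℂ)) * (X * q)) := by
    rw [smul_eq_C_mul, ← mul_assoc, ← C_mul, inv_mul_cancel₀ h2k, C_1, one_mul]
  rw [e2]
  exact I.smul_mem _ h1

/-- for n ∈ {0,1,2} and k ≥ 1, any subspace `I` with `A_{n,k}·I ⊆ I`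
is an ideal of ℂ[w], i.e. `w·I ⊆ I`. -/
theorem stmt7 (n k : ℕ) (hn : n = 0 ∨ n = 1 ∨ n = 2) (hk : 1 ≤ k)
    (I : Submodule ℂ ℂ[X]) (hAI : ∀ p ∈ Ank n k, ∀ q ∈ I, p * q ∈ I) :
    ∀ q ∈ I, (X : ℂ[X]) * q ∈ I := by
  intro q hq
  rcases hn with h | h | h <;> subst h
  · refine key k hk I q hq ((k:ℂ)^2) (hAI _ ?_ q hq)
    apply Submodule.subset_span
    refine ⟨X ^ 2, ?_⟩
    simp only [ffp, Finset.range_zero, Finset.prod_empty, one_comp, pow_comp, X_comp,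
      mul_one]
    simp only [map_pow, map_ofNat, map_one, map_mul, map_neg, map_add]
    ring
  · refine key k hk I q hq ((k:ℂ)^2) (hAI _ ?_ q hq)
    apply Submodule.subset_span
    refine ⟨X, ?_⟩
    simp only [ffp, Finset.range_one, Finset.prod_singleton, Nat.cast_zero, C_0, sub_zero,
      X_comp]
    simp only [map_pow, map_ofNat, map_one, map_mul, map_neg, map_add]
    ring
  · refine key k hk I q hq ((k:ℂ)^2 + k) (hAI _ ?_ q hq)
    apply Submodule.subset_span
    refine ⟨1, ?_⟩
    simp only [ffp, Finset.prod_range_succ, Finset.range_one, Finset.prod_singleton,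
      Nat.cast_zero, Nat.cast_one, C_0, sub_zero, one_comp, one_mul, mul_comp, sub_comp,
      X_comp, C_comp]
    simp only [map_pow, map_ofNat, map_one, map_mul, map_neg, map_add]
    ring
end

section
/- For all integers n ≥ 1 and k ≥ 1, and for every integer l ≥ n−1, the subspace A_{n,k} contains a polynomial of degree exactly l. (In particular, A_{2,k} contains a polynomial of degree l for every l ≥ 1.) -/
open Polynomial

lemma ffp_monic (n : ℕ) : (ffp n).Monic :=
  monic_prod_of_monic _ _ fun _ _ => monic_X_sub_C _

lemma ffp_natDegree (n : ℕ) : (ffp n).natDegree = n := by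
  rw [ffp, natDegree_prod_of_monic _ _ (fun i _ => monic_X_sub_C _)]
  simp only [natDegree_X_sub_C, Finset.sum_const, Finset.card_range, smul_eq_mul, mul_one]

lemma ffp_nextCoeff (n : ℕ) : (ffp n).nextCoeff = -∑ i ∈ Finset.range n, (i : ℂ) := by
  rw [ffp, Monic.nextCoeff_prod _ _ (fun i _ => monic_X_sub_C _)]
  simp only [nextCoeff_X_sub_C]
  rw [Finset.sum_neg_distrib]

lemma nextCoeff_X_pow_C (m : ℕ) : ((X : ℂ[X]) ^ m).nextCoeff = 0 := by
  cases m with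
  | zero => simp [nextCoeff]
  | succ m =>
    rw [nextCoeff_of_natDegree_pos (by simp)]
    simp [coeff_X_pow]

/-- for n ≥ 1, k ≥ 1 and every l ≥ n−1, `A_{n,k}` contains a polynomial
of degree exactly `l`. -/
theorem stmt9 (n k : ℕ) (hn : 1 ≤ n) (hk : 1 ≤ k) (l : ℕ) (hl : n - 1 ≤ l) :
    ∃ p ∈ Ank n k, p ≠ 0 ∧ p.natDegree = l := by
  set m : ℕ := l + 1 - n with hm
  have hmn : m + n = l + 1 := by omega
  set g : ℂ[X] := X ^ m * ffp n with hg
  set h : ℂ[X] := g.comp (X - C (k : ℂ)) with hh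
  set p : ℂ[X] := h - g with hp
  have hgm : g.Monic := (monic_X_pow m).mul (ffp_monic n)
  have hhm : h.Monic := hgm.comp_X_sub_C _
  have hgd : g.natDegree = l + 1 := by
    rw [hg, (monic_X_pow m).natDegree_mul (ffp_monic n), natDegree_X_pow, ffp_natDegree, hmn]
  have hhd : h.natDegree = l + 1 := by
    rw [hh, natDegree_comp, natDegree_X_sub_C, mul_one, hgd]
  have hgn : g.nextCoeff = -∑ i ∈ Finset.range n, (i : ℂ) := by
    rw [hg, (monic_X_pow m).nextCoeff_mul (ffp_monic n), ffp_nextCoeff, nextCoeff_X_pow_C,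
      zero_add]
  have hhn : h.nextCoeff = -((m : ℂ) + n) * k - ∑ i ∈ Finset.range n, (i : ℂ) := by
    have heq : h = (X - C (k : ℂ)) ^ m * ∏ i ∈ Finset.range n, (X - C ((k : ℂ) + i)) := by
      rw [hh, hg, mul_comp, pow_comp, X_comp, ffp, prod_comp]
      congr 1
      refine Finset.prod_congr rfl fun i _ => ?_
      rw [sub_comp, X_comp, C_comp, C_add, sub_sub]
    rw [heq, ((monic_X_sub_C _).pow m).nextCoeff_mul
        (monic_prod_of_monic _ _ fun i _ => monic_X_sub_C _),
      Monic.nextCoeff_pow (monic_X_sub_C _),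
      Monic.nextCoeff_prod _ _ (fun i _ => monic_X_sub_C _)]
    simp only [nextCoeff_X_sub_C, nsmul_eq_mul, neg_add, Finset.sum_add_distrib,
      Finset.sum_neg_distrib, Finset.sum_const, Finset.card_range, smul_eq_mul]
    ring
  have hcoeff : p.coeff l = -((m : ℂ) + n) * k := by
    have h1 : h.coeff l = h.nextCoeff := by
      rw [nextCoeff_of_natDegree_pos (by omega), hhd]
      norm_num
    have h2 : g.coeff l = g.nextCoeff := by
      rw [nextCoeff_of_natDegree_pos (by omega), hgd]
      norm_num
    rw [hp, coeff_sub, h1, h2, hhn, hgn]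
    ring
  have hcne : p.coeff l ≠ 0 := by
    rw [hcoeff]
    have h1 : ((m : ℂ) + n) ≠ 0 := by
      have : ((m + n : ℕ) : ℂ) ≠ 0 := Nat.cast_ne_zero.mpr (by omega)
      push_cast at this; exact this
    have hk' : (k : ℂ) ≠ 0 := Nat.cast_ne_zero.mpr (by omega)
    exact mul_ne_zero (neg_ne_zero.mpr h1) hk'
  have hpne : p ≠ 0 := fun h0 => hcne (by rw [h0, coeff_zero])
  have hdlt : p.natDegree < l + 1 := by
    rw [natDegree_lt_iff_degree_lt hpne]
    have hd : h.degree = g.degree := by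
      rw [degree_eq_natDegree hhm.ne_zero, degree_eq_natDegree hgm.ne_zero, hhd, hgd]
    have hsub := degree_sub_lt hd hhm.ne_zero (by rw [hhm.leadingCoeff, hgm.leadingCoeff])
    rw [← hp] at hsub
    calc p.degree < h.degree := hsub
      _ = ((l + 1 : ℕ) : WithBot ℕ) := by rw [degree_eq_natDegree hhm.ne_zero, hhd]
  have hdeq : p.natDegree = l :=
    le_antisymm (by omega) (le_natDegree_of_ne_zero hcne)
  refine ⟨p, ?_, hpne, hdeq⟩
  apply Submodule.subset_span
  exact ⟨X ^ m, by rw [hp, hh, hg, mul_comp]⟩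
end

section
/- For every integer n ≥ 1, A_{n,1} = [w−1]_{n−1}·ℂ[w]; that is, the linear span of {f(w−1)·[w−1]_n − f(w)·[w]_n : f ∈ ℂ[w]} equals the principal ideal of ℂ[w] generated by (w−1)(w−2)⋯(w−n+1). -/
/-!
Write `g = [w−1]_{n−1}`. Since `[w]_n = w·g` and `[w−1]_n = g·(w−n)`, the generator of `A_{n,1}`
attached to `f` is `g · T f` with `T f = f(w−1)(w−n) − f(w)·w` (`T = shiftDiff n`), so
`A_{n,1} = g · T(ℂ[w])`. The linear map `T` sends `w^d` to a polynomial of degree at most `d` whose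
coefficient of `w^d` is `−(n+d) ≠ 0`: it is triangular with nonzero diagonal in the monomial basis,
hence surjective, and `A_{n,1} = g·ℂ[w]`.
-/

open Polynomial

namespace Polynomial

theorem surjective_of_triangular {K : Type*} [Field K] (L : K[X] →ₗ[K] K[X])
    (hdeg : ∀ d, (L (X ^ d)).natDegree ≤ d) (hdiag : ∀ d, (L (X ^ d)).coeff d ≠ 0) :
    Function.Surjective L := by
  suffices h : ∀ d : ℕ, ∀ p : K[X], p.degree < d → p ∈ LinearMap.range L from
    fun p => h (p.natDegree + 1) p
      (degree_le_natDegree.trans_lt (by exact_mod_cast Nat.lt_succ_self _))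
  intro d
  induction d with
  | zero =>
    intro p hp
    obtain rfl : p = 0 := by simpa using hp
    exact Submodule.zero_mem _
  | succ d ih =>
    intro p hp
    set c := p.coeff d / (L (X ^ d)).coeff d
    have hlower : (p - c • L (X ^ d)).degree < d := by
      rw [degree_lt_iff_coeff_zero]
      intro m hm
      rw [coeff_sub, coeff_smul, smul_eq_mul]
      rcases hm.eq_or_lt with rfl | hm
      · rw [div_mul_cancel₀ _ (hdiag d), sub_self]
      · rw [coeff_eq_zero_of_degree_lt (hp.trans_le (by exact_mod_cast hm)),
          coeff_eq_zero_of_natDegree_lt ((hdeg d).trans_lt hm), mul_zero, sub_zero]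
    simpa using Submodule.add_mem _ (ih _ hlower) (Submodule.smul_mem _ c ⟨X ^ d, rfl⟩)

end Polynomial

section ShiftDiff

variable {R : Type*} [CommRing R]

noncomputable def shiftDiff (a : R) : R[X] →ₗ[R] R[X] :=
  LinearMap.mulRight R (X - C a) ∘ₗ (aeval (X - C 1)).toLinearMap - LinearMap.mulRight R X

theorem shiftDiff_apply (a : R) (f : R[X]) :
    shiftDiff a f = f.comp (X - C 1) * (X - C a) - f * X :=
  rfl

theorem shiftDiff_X_pow (a : R) (d : ℕ) :
    shiftDiff a (X ^ d) = (X - C 1) ^ d * (X - C a) - X ^ (d + 1) := by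
  rw [shiftDiff_apply, X_pow_comp, pow_succ]

variable [Nontrivial R]

theorem isMonicOfDegree_X_sub_one_pow_mul (a : R) (d : ℕ) :
    IsMonicOfDegree ((X - C 1) ^ d * (X - C a)) (d + 1) := by
  simpa using ((isMonicOfDegree_X_sub_one 1).pow d).mul (isMonicOfDegree_X_sub_one a)

theorem natDegree_shiftDiff_X_pow_le (a : R) (d : ℕ) : (shiftDiff a (X ^ d)).natDegree ≤ d := by
  rw [shiftDiff_X_pow, ← Nat.lt_succ_iff]
  exact (isMonicOfDegree_X_sub_one_pow_mul a d).natDegree_sub_X_pow d.succ_ne_zero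

theorem coeff_shiftDiff_X_pow (a : R) (d : ℕ) : (shiftDiff a (X ^ d)).coeff d = -(d + a) := by
  have hdeg := (isMonicOfDegree_X_sub_one_pow_mul a d).natDegree_eq
  have hnext : ((X - C 1) ^ d * (X - C a)).nextCoeff = -(d + a) := by
    rw [((monic_X_sub_C 1).pow d).nextCoeff_mul (monic_X_sub_C a),
      (monic_X_sub_C 1).nextCoeff_pow, nextCoeff_X_sub_C, nextCoeff_X_sub_C]
    simp [add_comm]
  rw [shiftDiff_X_pow, coeff_sub, coeff_X_pow, if_neg d.succ_ne_self.symm, sub_zero, ← hnext,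
    nextCoeff_of_natDegree_pos (hdeg ▸ d.succ_pos), hdeg, Nat.add_sub_cancel]

end ShiftDiff

theorem shiftDiff_surjective {K : Type*} [Field K] {a : K} (ha : ∀ d : ℕ, (d : K) + a ≠ 0) :
    Function.Surjective (shiftDiff a) :=
  surjective_of_triangular _ (natDegree_shiftDiff_X_pow_le a)
    fun d => by rw [coeff_shiftDiff_X_pow]; exact neg_ne_zero.2 (ha d)

theorem ffp_comp_X_sub_one (m : ℕ) :
    (ffp m).comp (X - C 1) = ∏ i ∈ Finset.range m, (X - C ((i : ℂ) + 1)) := by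
  rw [ffp, prod_comp]
  refine Finset.prod_congr rfl fun i _ => ?_
  rw [sub_comp, X_comp, C_comp, sub_sub, ← C_add, add_comm]

theorem ffp_succ (m : ℕ) : ffp (m + 1) = X * (ffp m).comp (X - C 1) := by
  rw [ffp_comp_X_sub_one, ffp, Finset.prod_range_succ']
  simp [mul_comm]

theorem ffp_succ_comp_X_sub_one (m : ℕ) :
    (ffp (m + 1)).comp (X - C 1) = (ffp m).comp (X - C 1) * (X - C ((m : ℂ) + 1)) := by
  rw [ffp_comp_X_sub_one, ffp_comp_X_sub_one, Finset.prod_range_succ]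

theorem comp_mul_ffp_succ_sub (m : ℕ) (f : ℂ[X]) :
    f.comp (X - C 1) * (ffp (m + 1)).comp (X - C 1) - f * ffp (m + 1) =
      (ffp m).comp (X - C 1) * shiftDiff ((m : ℂ) + 1) f := by
  rw [shiftDiff_apply, ffp_succ_comp_X_sub_one, ffp_succ]
  ring

theorem Ank_succ_one_eq_range (m : ℕ) :
    Ank (m + 1) 1 = LinearMap.range
      (LinearMap.mulLeft ℂ ((ffp m).comp (X - C 1)) ∘ₗ shiftDiff ((m : ℂ) + 1)) := by
  rw [Ank, ← Submodule.span_eq (LinearMap.range _), LinearMap.coe_range]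
  congr 1
  ext p
  simp only [Set.mem_ofPred_eq, Set.mem_range, LinearMap.comp_apply, LinearMap.mulLeft_apply,
    Nat.cast_one, comp_mul_ffp_succ_sub]
  exact exists_congr fun _ => eq_comm

/-- `A_{n,1} = [w−1]_{n−1}·ℂ[w]`, the ideal generated by
`(w−1)(w−2)⋯(w−n+1)`. -/
theorem stmt10 (n : ℕ) (hn : 1 ≤ n) :
    Ank n 1 = (Ideal.span {(ffp (n - 1)).comp (X - C 1)}).restrictScalars ℂ := by
  obtain ⟨m, rfl⟩ := Nat.exists_eq_add_one.2 hn
  have hsurj : Function.Surjective (shiftDiff ((m : ℂ) + 1)) :=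
    shiftDiff_surjective fun d => by norm_cast
  rw [Ank_succ_one_eq_range,
    LinearMap.range_comp_of_range_eq_top _ (LinearMap.range_eq_top.2 hsurj), Nat.add_sub_cancel]
  ext p
  simp [Ideal.mem_span_singleton', mul_comm]
end

section
/- Let n ≥ 0 and k ≥ 1 be integers and let I be a nonzero ℂ-subspace of ℂ[w] satisfying A_{n,k}·I ⊆ I (i.e. p·q ∈ I for all p ∈ A_{n,k} and q ∈ I). Then I has finite codimension in ℂ[w], i.e. the quotient vector space ℂ[w]/I is finite-dimensional. -/
open Polynomial

lemma delta_deg (h : ℂ[X]) (hm : h.Monic) (h1 : 1 ≤ h.natDegree) (c : ℂ) (hc : c ≠ 0) :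
    (h.comp (X - C c) - h).natDegree = h.natDegree - 1 ∧ h.comp (X - C c) - h ≠ 0 := by
  set m := h.natDegree with hmdef
  have hcomp : h.comp (X - C c) = taylor (-c) h := by
    rw [taylor_apply, map_neg, sub_eq_add_neg]
  have hhd : hasseDeriv (m - 1) h = C (h.coeff (m - 1)) + C (m : ℂ) * X := by
    ext j
    rw [hasseDeriv_coeff]
    match j with
    | 0 =>
      simp [Nat.choose_self]
    | 1 =>
      have e1 : 1 + (m - 1) = m := by omega
      rw [e1]
      have e2 : m.choose (m-1) = m := by
        rw [Nat.choose_symm (by omega)]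
        have : m - (m - 1) = 1 := by omega
        simp [Nat.choose_one_right]
      have e3 : h.coeff m = 1 := hm.coeff_natDegree
      simp [e2, e3]
    | (j+2) =>
      have : h.coeff (j + 2 + (m-1)) = 0 := by
        apply coeff_eq_zero_of_natDegree_lt; omega
      simp [this, coeff_X, coeff_C]
  have hcoeff : (h.comp (X - C c) - h).coeff (m - 1) = -(m * c) := by
    rw [coeff_sub, hcomp, taylor_coeff, hhd]
    simp
  have hne : h.comp (X - C c) - h ≠ 0 := by
    intro h0
    rw [h0] at hcoeff
    simp at hcoeff
    rcases hcoeff with h' | h'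
    · exact absurd h' (by exact_mod_cast by omega)
    · exact hc h'
  refine ⟨?_, hne⟩
  have hXC : (X - C c).natDegree = 1 := natDegree_X_sub_C c
  have hmono : (h.comp (X - C c)).Monic := hm.comp (monic_X_sub_C c) (by rw [hXC]; omega)
  have hdc : (h.comp (X - C c)).natDegree = m := by rw [natDegree_comp, hXC, mul_one]
  have hlt : (h.comp (X - C c) - h).degree < (m : WithBot ℕ) := by
    have hd : (h.comp (X - C c)).degree = h.degree := by
      rw [degree_eq_natDegree hmono.ne_zero, degree_eq_natDegree hm.ne_zero, hdc]
    have := degree_sub_lt hd hmono.ne_zero (by rw [hmono.leadingCoeff, hm.leadingCoeff])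
    rwa [degree_eq_natDegree hmono.ne_zero, hdc] at this
  have hub : (h.comp (X - C c) - h).natDegree < m := by
    rwa [← natDegree_lt_iff_degree_lt hne] at hlt
  have hlb : m - 1 ≤ (h.comp (X - C c) - h).natDegree := by
    apply le_natDegree_of_ne_zero
    rw [hcoeff]
    simp only [ne_eq, neg_eq_zero, mul_eq_zero, not_or]
    exact ⟨by exact_mod_cast by omega, hc⟩
  omega



lemma reduce_mod (I : Submodule ℂ ℂ[X]) (B : ℕ)
    (ht : ∀ N, B ≤ N → ∃ t ∈ I, t.natDegree = N ∧ t ≠ 0) :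
    ∀ r : ℂ[X], ∃ s : ℂ[X], s.degree < (B : WithBot ℕ) ∧ r - s ∈ I := by
  suffices H : ∀ N : ℕ, ∀ r : ℂ[X], r.natDegree ≤ N →
      ∃ s : ℂ[X], s.degree < (B : WithBot ℕ) ∧ r - s ∈ I by
    intro r; exact H r.natDegree r le_rfl
  intro N
  induction N using Nat.strong_induction_on with
  | _ N ih =>
    intro r hr
    by_cases hdeg : r.degree < (B : WithBot ℕ)
    · exact ⟨r, hdeg, by simp⟩
    · push_neg at hdeg
      have hr0 : r ≠ 0 := by
        rintro rfl
        simp only [degree_zero] at hdeg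
        exact absurd hdeg (by simp)
      have hBr : B ≤ r.natDegree := by
        rwa [degree_eq_natDegree hr0, Nat.cast_le] at hdeg
      obtain ⟨t, htI, htdeg, ht0⟩ := ht r.natDegree hBr
      set c := r.leadingCoeff / t.leadingCoeff with hcdef
      have hc0 : c ≠ 0 := div_ne_zero (leadingCoeff_ne_zero.2 hr0) (leadingCoeff_ne_zero.2 ht0)
      have hct0 : C c * t ≠ 0 := mul_ne_zero (by simpa using hc0) ht0
      have hdeq : r.degree = (C c * t).degree := by
        rw [degree_C_mul hc0, degree_eq_natDegree hr0, degree_eq_natDegree ht0, htdeg]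
      have hlceq : r.leadingCoeff = (C c * t).leadingCoeff := by
        rw [leadingCoeff_mul, leadingCoeff_C, hcdef,
          div_mul_cancel₀ _ (leadingCoeff_ne_zero.2 ht0)]
      have hlt : (r - C c * t).degree < r.degree := degree_sub_lt hdeq hr0 hlceq
      by_cases hr' : r - C c * t = 0
      · refine ⟨0, by rw [degree_zero]; exact WithBot.bot_lt_coe B, ?_⟩
        rw [sub_zero]
        have : r = C c * t := by linear_combination hr'
        rw [this, ← smul_eq_C_mul]
        exact I.smul_mem c htI
      · have hlt' : (r - C c * t).natDegree < r.natDegree := by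
          rwa [degree_eq_natDegree hr0, ← natDegree_lt_iff_degree_lt hr'] at hlt
        obtain ⟨s, hs, hmem⟩ := ih (r - C c * t).natDegree (lt_of_lt_of_le hlt' hr)
          (r - C c * t) le_rfl
        refine ⟨s, hs, ?_⟩
        have : r - s = (r - C c * t - s) + C c * t := by ring
        rw [this]
        exact I.add_mem hmem (by rw [← smul_eq_C_mul]; exact I.smul_mem c htI)


/-- Lemma 3.5 b: a nonzero subspace `I` with `A_{n,k}·I ⊆ I` has
finite codimension in ℂ[w]. -/
theorem stmt11 (n k : ℕ) (hk : 1 ≤ k) (I : Submodule ℂ ℂ[X]) (hI : I ≠ ⊥)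
    (hAI : ∀ p ∈ Ank n k, ∀ q ∈ I, p * q ∈ I) :
    FiniteDimensional ℂ (ℂ[X] ⧸ I) := by
  obtain ⟨q, hqI, hq0⟩ := Submodule.exists_mem_ne_zero_of_ne_bot hI
  set B := n + q.natDegree with hB
  have ht : ∀ N, B ≤ N → ∃ t ∈ I, t.natDegree = N ∧ t ≠ 0 := by
    intro N hN
    set d := N + 1 - B with hd
    set h := X ^ d * ffp n with hh
    have hmon : h.Monic := (monic_X_pow d).mul (ffp_monic n)
    have hdeg : h.natDegree = d + n := by
      rw [hh, natDegree_mul (monic_X_pow d).ne_zero (ffp_monic n).ne_zero,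
        natDegree_X_pow, ffp_natDegree]
    obtain ⟨hΔdeg, hΔ0⟩ := delta_deg h hmon (by omega) (k : ℂ)
      (by exact_mod_cast Nat.one_le_iff_ne_zero.mp hk)
    set p := h.comp (X - C (k : ℂ)) - h with hp
    have hpA : p ∈ Ank n k := by
      apply Submodule.subset_span
      exact ⟨X ^ d, by rw [hp, hh, mul_comp]⟩
    refine ⟨p * q, hAI p hpA q hqI, ?_, mul_ne_zero hΔ0 hq0⟩
    rw [natDegree_mul hΔ0 hq0, hΔdeg, hdeg]
    omega
  have H := reduce_mod I B ht
  haveI : FiniteDimensional ℂ (Polynomial.degreeLT ℂ B) :=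
    LinearEquiv.finiteDimensional (Polynomial.degreeLTEquiv ℂ B).symm
  have hsurj : Function.Surjective ((I.mkQ).comp (Submodule.subtype (Polynomial.degreeLT ℂ B))) := by
    intro x
    obtain ⟨r, rfl⟩ := Submodule.mkQ_surjective I x
    obtain ⟨s, hs, hmem⟩ := H r
    refine ⟨⟨s, Polynomial.mem_degreeLT.2 hs⟩, ?_⟩
    simp only [LinearMap.comp_apply, Submodule.subtype_apply, Submodule.mkQ_apply]
    rw [Submodule.Quotient.eq]
    simpa using I.neg_mem hmem
  exact Module.Finite.of_surjective _ hsurj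
end

section
/- For every integer k, every polynomial f ∈ ℂ[w], and all u, v ∈ ℂ[t, t⁻¹]: B((t^k f(D) D)·u, v) = B(u, (t^{−k} f̄(D−k) D)·v). That is, for every element a of the Lie algebra D^{(1)}, the operator ω(a) = t^{−k} f̄(D−k) D (for a = t^k f(D) D) is the adjoint of a with respect to the Hermitian pairing B. -/
open Polynomial

/-- Coefficientwise complex conjugation of a polynomial: `f̄`. -/
noncomputable def pconj (f : ℂ[X]) : ℂ[X] := f.map (starRingEnd ℂ)

/-- The Hermitian pairing `B(f, g) = Res_t f̄ dg` on `ℂ[t,t⁻¹] ≃ (ℤ →₀ ℂ)`,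
conjugate-linear in the first argument, with `B(t^l, t^n) = n·δ_{l,n}`. -/
noncomputable def Bform (u v : ℤ →₀ ℂ) : ℂ :=
  u.sum fun j c => (starRingEnd ℂ) c * (j : ℂ) * v j


lemma wtOp_apply (f : ℂ[X]) (u : ℤ →₀ ℂ) (a : ℤ) :
    wtOp f u a = f.eval (a : ℂ) * u a := by
  classical
  simp only [wtOp, Finsupp.lsum_apply, Finsupp.sum_apply]
  rw [Finsupp.sum]
  simp only [LinearMap.smul_apply, Finsupp.lsingle_apply, Finsupp.smul_apply,
    Finsupp.single_apply, smul_eq_mul]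
  rw [Finset.sum_eq_single a]
  · by_cases h : a ∈ u.support
    · simp
    · simp [Finsupp.notMem_support_iff.mp h]
  · intro b _ hb; simp [hb]
  · intro h; simp [Finsupp.notMem_support_iff.mp h]

lemma op_apply (k : ℤ) (f : ℂ[X]) (u : ℤ →₀ ℂ) (a : ℤ) :
    op k f u a = f.eval ((a - k : ℤ) : ℂ) * u (a - k) := by
  have hinj : Function.Injective (fun j : ℤ => j + k) := add_left_injective k
  have : op k f u a = (wtOp f u) (a - k) := by
    simp only [op, LinearMap.comp_apply, shOp, Finsupp.lmapDomain_apply]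
    have := Finsupp.mapDomain_apply hinj (wtOp f u) (a - k)
    simpa using this
  rw [this, wtOp_apply]

lemma pconj_eval (f : ℂ[X]) (j : ℤ) :
    (pconj f).eval ((j : ℤ) : ℂ) = (starRingEnd ℂ) (f.eval (j : ℂ)) := by
  rw [pconj, eval_map]
  have : ((j : ℤ) : ℂ) = (starRingEnd ℂ) ((j : ℤ) : ℂ) := by simp
  rw [this, Polynomial.eval₂_at_apply]; simp

/-- `B((t^k f(D) D)·u, v) = B(u, (t^{−k} f̄(D−k) D)·v)`, i.e.
`ω(t^k f(D) D) = t^{−k} f̄(D−k) D` is the adjoint of `t^k f(D) D` w.r.t. `B`. -/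
theorem stmt19 (k : ℤ) (f : ℂ[X]) (u v : ℤ →₀ ℂ) :
    Bform ((op k (f * X)) u) v
      = Bform u ((op (-k) ((pconj f).comp (X - C (k : ℂ)) * X)) v) := by
  classical
  have hL : Bform ((op k (f * X)) u) v
      = u.sum fun j c => (starRingEnd ℂ) ((f * X).eval (j : ℂ) * c) * ((j + k : ℤ) : ℂ) * v (j + k) := by
    simp only [Bform, op, LinearMap.comp_apply, shOp, Finsupp.lmapDomain_apply]
    rw [Finsupp.sum_mapDomain_index (by simp) (by intros; rw [map_add]; ring)]
    simp only [wtOp, Finsupp.lsum_apply]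
    rw [Finsupp.sum_sum_index (by simp) (by intros; rw [map_add]; ring)]
    apply Finsupp.sum_congr
    intro j _
    simp only [LinearMap.smul_apply, Finsupp.lsingle_apply, smul_eq_mul,
      Finsupp.smul_single, smul_eq_mul, mul_one]
    rw [Finsupp.sum_single_index (by simp)]
  rw [hL, Bform]
  apply Finsupp.sum_congr
  intro j _
  rw [op_apply]
  have hj : j - -k = j + k := by ring
  rw [hj]
  simp only [eval_mul, eval_comp, eval_sub, eval_X, eval_C, map_mul, pconj_eval]
  push_cast
  have : ((j : ℂ) + k - k) = (j : ℂ) := by ring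
  rw [this]
  rw [← pconj_eval]
  rw [pconj_eval]
  simp only [map_mul, map_intCast]
  ring
end
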